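/- Assume Υ(0) = Υ₀ = n₀/(n₀+1) with n₀ ≥ 0, Υ(1) = 1, σ(0) = 0, σ(1) = γ₁ − 1 with 1 < γ₁ ≤ 2. Then each of the following points of [0,1]³ is a zero of the vector field F: B₁ = (0, (n₀+1)/(n₀+2), 0); B₂ = (0, 1, 0); B₃ = (1, 1, 0); T₁ = (0, 1, 1); T₂ = (1, 1, 1); T₃ = (1/2, 2/(2+γ₁²), 1); every point (1, 0, Ω), (3/4, 0, Ω) and (0, 0, Ω) with Ω ∈ [0,1]; every point (U, 1, 0) with U ∈ [0,1] in the case n₀ = 0; and, when n₀ > 3, the point B₄ = ((n₀−3)/(2(n₀−2)), (2n₀+2)/(3n₀+1), 0). -/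

import Mathlib

open Set

/-- `H(U,V,Ω) = (1+σ(Ω))V(1−U+σ(Ω)U)`. -/
noncomputable def Hfun (σ : ℝ → ℝ) (U V W : ℝ) : ℝ :=
  (1 + σ W) * V * (1 - U + σ W * U)

/-- The vector field `F` on the cube `[0,1]³` in coordinates `(U,V,Ω)`. -/
noncomputable def Ffield (Υ σ f : ℝ → ℝ) (U V W : ℝ) : ℝ × ℝ × ℝ :=
  (U * (1 - U) * ((1 - V) * (3 - 4 * U) - Υ W * Hfun σ U V W),
   V * (1 - V) * ((2 * U - 1) * (1 - V + 2 * σ W * V) + (1 - Υ W) * Hfun σ U V W),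
   -(f W) * W * (1 - W) * Hfun σ U V W)

/-! Each listed point kills every component of `F` either through one of the factors `U(1−U)`,
`V(1−V)`, `Ω(1−Ω)` or through its bracket. On the face `Ω = 0`, `σ(0) = 0` reduces `H` to
`V(1−U)`, so B₁ and B₄ solve linear conditions in `Υ₀`; on `Ω = 1` with `U = 1/2`, `σ(1) = γ₁ − 1`
gives `H = γ₁²V/2`, whence the `V`-coordinate of T₃. -/

section

variable {Υ σ f : ℝ → ℝ} {U V W : ℝ}

theorem Hfun_of_eq_zero (h : σ W = 0) : Hfun σ U V W = V * (1 - U) := by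
  simp only [Hfun, h]
  ring

theorem Ffield_eq_zero_of_mul_one_sub_eq_zero (hU : U * (1 - U) = 0) (hV : V * (1 - V) = 0)
    (hW : W * (1 - W) = 0) : Ffield Υ σ f U V W = 0 := by
  simp only [Ffield, Prod.mk_eq_zero, hU, hV, zero_mul, true_and]
  linear_combination -(f W) * Hfun σ U V W * hW

theorem Ffield_V_zero (U W : ℝ) : Ffield Υ σ f U 0 W = (U * (1 - U) * (3 - 4 * U), 0, 0) := by
  simp only [Ffield, Hfun, Prod.mk.injEq]
  refine ⟨by ring, by ring, by ring⟩

theorem Ffield_eq_zero_of_V_eq_one_of_W_eq_zero (hΥ : Υ 0 = 0) (U : ℝ) :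
    Ffield Υ σ f U 1 0 = 0 := by
  simp only [Ffield, hΥ, Prod.mk_eq_zero]
  refine ⟨by ring, by ring, by ring⟩

theorem Ffield_eq_zero_of_U_eq_zero_of_W_eq_zero (hσ : σ 0 = 0) (hV : (2 - Υ 0) * V = 1) :
    Ffield Υ σ f 0 V 0 = 0 := by
  simp only [Ffield, Hfun_of_eq_zero hσ, hσ, Prod.mk_eq_zero]
  refine ⟨by ring, ?_, by ring⟩
  linear_combination V * (1 - V) * hV

theorem Ffield_eq_zero_of_W_eq_zero (hσ : σ 0 = 0)
    (h₁ : (1 - V) * (3 - 4 * U) = Υ 0 * (V * (1 - U)))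
    (h₂ : (1 - 2 * U) * (1 - V) = (1 - Υ 0) * (V * (1 - U))) :
    Ffield Υ σ f U V 0 = 0 := by
  simp only [Ffield, Hfun_of_eq_zero hσ, hσ, Prod.mk_eq_zero]
  refine ⟨?_, ?_, by ring⟩
  · linear_combination U * (1 - U) * h₁
  · linear_combination -(V * (1 - V)) * h₂

theorem Ffield_eq_zero_of_U_eq_half_of_W_eq_one (hΥ : Υ 1 = 1)
    (hV : (2 + (1 + σ 1) ^ 2) * V = 2) : Ffield Υ σ f (1 / 2) V 1 = 0 := by
  simp only [Ffield, Hfun, hΥ, Prod.mk_eq_zero]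
  refine ⟨?_, by ring, by ring⟩
  linear_combination -(1 / 8) * hV

end

theorem stmt1_general
    (Υ σ f : ℝ → ℝ)
    (n₀ γ₁ : ℝ) (hn₀ : 0 ≤ n₀)
    (hΥ0 : Υ 0 = n₀ / (n₀ + 1)) (hΥ1 : Υ 1 = 1)
    (hσ0 : σ 0 = 0) (hσ1 : σ 1 = γ₁ - 1) :
    -- B₁
    Ffield Υ σ f 0 ((n₀ + 1) / (n₀ + 2)) 0 = 0 ∧
    -- B₂
    Ffield Υ σ f 0 1 0 = 0 ∧
    -- B₃
    Ffield Υ σ f 1 1 0 = 0 ∧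
    -- T₁
    Ffield Υ σ f 0 1 1 = 0 ∧
    -- T₂
    Ffield Υ σ f 1 1 1 = 0 ∧
    -- T₃
    Ffield Υ σ f (1 / 2) (2 / (2 + γ₁ ^ 2)) 1 = 0 ∧
    -- L₁, L₂, L₃
    (∀ W ∈ Icc (0:ℝ) 1,
      Ffield Υ σ f 1 0 W = 0 ∧ Ffield Υ σ f (3 / 4) 0 W = 0 ∧ Ffield Υ σ f 0 0 W = 0) ∧
    -- L₄ (only when n₀ = 0)
    (n₀ = 0 → ∀ U ∈ Icc (0:ℝ) 1, Ffield Υ σ f U 1 0 = 0) ∧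
    -- B₄ (only when n₀ > 3)
    (3 < n₀ →
      Ffield Υ σ f ((n₀ - 3) / (2 * (n₀ - 2))) ((2 * n₀ + 2) / (3 * n₀ + 1)) 0 = 0) := by
  have hn₁ : n₀ + 1 ≠ 0 := by linarith
  have hn₂ : n₀ + 2 ≠ 0 := by linarith
  have corner := @Ffield_eq_zero_of_mul_one_sub_eq_zero Υ σ f
  refine ⟨?B₁, corner (by norm_num) (by norm_num) (by norm_num),
    corner (by norm_num) (by norm_num) (by norm_num), corner (by norm_num) (by norm_num) (by norm_num),
    corner (by norm_num) (by norm_num) (by norm_num), ?T₃, ?L, ?L₄, ?B₄⟩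
  case B₁ =>
    refine Ffield_eq_zero_of_U_eq_zero_of_W_eq_zero hσ0 ?_
    rw [hΥ0]
    field_simp
    ring
  case L =>
    intro W _
    norm_num [Ffield_V_zero]
  case T₃ =>
    refine Ffield_eq_zero_of_U_eq_half_of_W_eq_one hΥ1 ?_
    rw [hσ1]
    field_simp
    ring
  case L₄ =>
    intro h U _
    exact Ffield_eq_zero_of_V_eq_one_of_W_eq_zero (by simp [hΥ0, h]) U
  case B₄ =>
    intro h
    have : n₀ - 2 ≠ 0 := by linarith
    have : 3 * n₀ + 1 ≠ 0 := by linarith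
    refine Ffield_eq_zero_of_W_eq_zero hσ0 ?_ ?_ <;>
    · rw [hΥ0]
      field_simp
      ring

/-- Under the stated boundary conditions on `Υ` and `σ`, the listed
points of `[0,1]³` are zeros of the vector field `F`. -/
theorem stmt1
    (Υ σ f : ℝ → ℝ)
    (hΥ : ContDiffOn ℝ 1 Υ (Icc 0 1)) (hσ : ContDiffOn ℝ 1 σ (Icc 0 1))
    (hf : ContDiffOn ℝ 1 f (Icc 0 1))
    (hfpos : ∀ x ∈ Icc (0:ℝ) 1, 0 < f x)
    (hσnonneg : ∀ x ∈ Icc (0:ℝ) 1, 0 ≤ σ x)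
    (hΥnonneg : ∀ x ∈ Icc (0:ℝ) 1, 0 ≤ Υ x)
    (n₀ γ₁ : ℝ) (hn₀ : 0 ≤ n₀) (hγ₁ : 1 < γ₁) (hγ₁' : γ₁ ≤ 2)
    (hΥ0 : Υ 0 = n₀ / (n₀ + 1)) (hΥ1 : Υ 1 = 1)
    (hσ0 : σ 0 = 0) (hσ1 : σ 1 = γ₁ - 1) :
    -- B₁
    Ffield Υ σ f 0 ((n₀ + 1) / (n₀ + 2)) 0 = 0 ∧
    -- B₂
    Ffield Υ σ f 0 1 0 = 0 ∧
    -- B₃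
    Ffield Υ σ f 1 1 0 = 0 ∧
    -- T₁
    Ffield Υ σ f 0 1 1 = 0 ∧
    -- T₂
    Ffield Υ σ f 1 1 1 = 0 ∧
    -- T₃
    Ffield Υ σ f (1 / 2) (2 / (2 + γ₁ ^ 2)) 1 = 0 ∧
    -- L₁, L₂, L₃
    (∀ W ∈ Icc (0:ℝ) 1,
      Ffield Υ σ f 1 0 W = 0 ∧ Ffield Υ σ f (3 / 4) 0 W = 0 ∧ Ffield Υ σ f 0 0 W = 0) ∧
    -- L₄ (only when n₀ = 0)
    (n₀ = 0 → ∀ U ∈ Icc (0:ℝ) 1, Ffield Υ σ f U 1 0 = 0) ∧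
    -- B₄ (only when n₀ > 3)
    (3 < n₀ →
      Ffield Υ σ f ((n₀ - 3) / (2 * (n₀ - 2))) ((2 * n₀ + 2) / (3 * n₀ + 1)) 0 = 0) :=
  stmt1_general Υ σ f n₀ γ₁ hn₀ hΥ0 hΥ1 hσ0 hσ1
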